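/- arXiv:2109.04123 — 3 statements merged into one kernel-verified Lean document; each statement's English description precedes it below -/
import Mathlib

section
/- Suppose a measurable kernel k : ℝ₊ × ℝⁿ × ℝⁿ → ℂ satisfies |k_{t-s}(x,y)| ≤ C (√(t-s) + |x-y|)^{-n-1}. Then for all t > 0 and x ∈ ℝⁿ the integral I₂(t,x) = ∫_{t/2}^{t} ∫_{B(x,√t)} |k_{t-s}(x,y)| · |α(s,y)| dy ds satisfies I₂(t,x) ≤ C' √t ‖α‖_{L^∞}, where ‖α‖_{L^∞} = esssup |α|. -/
/-!
Bound the kernel by its majorant and `|α|` by `‖α‖_∞`, then integrate in `y` over all of `ℝⁿ`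
rather than the ball. Translation and the dilation `y ↦ √τ y` (Haar measure scales by `τ^{n/2}`)
give `∫ (√τ + |x - y|)^{-n-1} dy = K / √τ` with `K = ∫ (1 + |z|)^{-n-1} dz < ∞`, and
`∫_{t/2}^t (t - s)^{-1/2} ds = √(2t)`.
-/

open MeasureTheory Metric Module
open scoped ENNReal

section HaarScaling

variable {E : Type*} [NormedAddCommGroup E] [NormedSpace ℝ E] [FiniteDimensional ℝ E]
  [MeasurableSpace E] [BorelSpace E] (μ : Measure E) [μ.IsAddHaarMeasure]

theorem lintegral_comp_smul_of_pos {f : E → ℝ≥0∞} (hf : Measurable f) {a : ℝ} (ha : 0 < a) :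
    ∫⁻ z, f (a • z) ∂μ = ENNReal.ofReal (a ^ finrank ℝ E)⁻¹ * ∫⁻ z, f z ∂μ := by
  rw [← lintegral_map hf (measurable_const_smul a), Measure.map_addHaar_smul μ ha.ne',
    lintegral_smul_measure, abs_of_pos (by positivity), smul_eq_mul]

theorem lintegral_add_dist_rpow_neg (x : E) {a : ℝ} (ha : 0 < a) (r : ℝ) :
    ∫⁻ y, ENNReal.ofReal ((a + dist x y) ^ (-r)) ∂μ =
      ENNReal.ofReal (a ^ ((finrank ℝ E : ℝ) - r)) *
        ∫⁻ z, ENNReal.ofReal ((1 + ‖z‖) ^ (-r)) ∂μ := by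
  have hscale (z : E) : ENNReal.ofReal ((a + ‖a • z‖) ^ (-r)) =
      ENNReal.ofReal (a ^ (-r)) * ENNReal.ofReal ((1 + ‖z‖) ^ (-r)) := by
    rw [norm_smul, Real.norm_of_nonneg ha.le, ← mul_one_add, Real.mul_rpow ha.le (by positivity),
      ENNReal.ofReal_mul (by positivity)]
  have hdilate := lintegral_comp_smul_of_pos μ
    (f := fun z => ENNReal.ofReal ((a + ‖z‖) ^ (-r))) (by fun_prop) ha
  beta_reduce at hdilate
  calc ∫⁻ y, ENNReal.ofReal ((a + dist x y) ^ (-r)) ∂μ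
      = ∫⁻ z, ENNReal.ofReal ((a + ‖z‖) ^ (-r)) ∂μ := by
        simp_rw [dist_eq_norm']
        exact lintegral_sub_right_eq_self (fun z => ENNReal.ofReal ((a + ‖z‖) ^ (-r))) x
    _ = ENNReal.ofReal (a ^ finrank ℝ E) * ∫⁻ z, ENNReal.ofReal ((a + ‖a • z‖) ^ (-r)) ∂μ := by
        rw [hdilate, ← mul_assoc, ← ENNReal.ofReal_mul (by positivity),
          mul_inv_cancel₀ (by positivity), ENNReal.ofReal_one, one_mul]
    _ = _ := by
        simp_rw [hscale]
        rw [lintegral_const_mul _ (by fun_prop), ← mul_assoc, ← ENNReal.ofReal_mul (by positivity),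
          ← Real.rpow_natCast, ← Real.rpow_add ha, sub_eq_add_neg]

theorem lintegral_norm_mul_le_of_le_add_dist_rpow {F G : Type*} [NormedAddCommGroup F]
    [NormedAddCommGroup G] {κ : E → F} {g : E → G} {C a : ℝ} {M : ℝ≥0∞} {x : E} (ha : 0 < a)
    (hκ : ∀ y, ‖κ y‖ ≤ C * (a + dist x y) ^ (-((finrank ℝ E : ℝ) + 1)))
    (hg : ∀ᵐ y ∂μ, ‖g y‖ₑ ≤ M) :
    ∫⁻ y, ENNReal.ofReal (‖κ y‖ * ‖g y‖) ∂μ ≤ ENNReal.ofReal a⁻¹ *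
      (ENNReal.ofReal C * (∫⁻ z, ENNReal.ofReal ((1 + ‖z‖) ^ (-((finrank ℝ E : ℝ) + 1))) ∂μ) *
        M) := by
  calc ∫⁻ y, ENNReal.ofReal (‖κ y‖ * ‖g y‖) ∂μ
      ≤ ∫⁻ y, ENNReal.ofReal C *
          ENNReal.ofReal ((a + dist x y) ^ (-((finrank ℝ E : ℝ) + 1))) * M ∂μ := by
        refine lintegral_mono_ae ?_
        filter_upwards [hg] with y hy
        rw [ENNReal.ofReal_mul (norm_nonneg _), ofReal_norm (g y),
          ← ENNReal.ofReal_mul' (by positivity)]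
        gcongr
        exact hκ y
    _ = ENNReal.ofReal C * (ENNReal.ofReal a⁻¹ *
          ∫⁻ z, ENNReal.ofReal ((1 + ‖z‖) ^ (-((finrank ℝ E : ℝ) + 1))) ∂μ) * M := by
        rw [lintegral_mul_const _ (by fun_prop), lintegral_const_mul _ (by fun_prop),
          lintegral_add_dist_rpow_neg μ x ha, sub_add_cancel_left, Real.rpow_neg_one]
    _ = _ := by ring

end HaarScaling

theorem lintegral_Ioc_inv_sqrt_sub {a b : ℝ} (hab : a ≤ b) :
    ∫⁻ s in Set.Ioc a b, ENNReal.ofReal (Real.sqrt (b - s))⁻¹ =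
      ENNReal.ofReal (2 * Real.sqrt (b - a)) := by
  set f : ℝ → ℝ := fun u => u ^ (-(1 / 2) : ℝ)
  have hf : ∀ s ∈ Set.Ioc a b, (Real.sqrt (b - s))⁻¹ = f (b - s) := fun s hs => by
    rw [show f (b - s) = _ from Real.rpow_neg (sub_nonneg.2 hs.2) _, Real.sqrt_eq_rpow]
  have hint : IntervalIntegrable (fun s => f (b - s)) volume a b := by
    have := (intervalIntegral.intervalIntegrable_rpow' (a := 0) (b := b - a)
      (r := -(1 / 2)) (by norm_num)).comp_sub_left b
    rw [sub_zero, sub_sub_cancel] at this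
    exact this.symm
  have hnonneg : 0 ≤ᵐ[volume.restrict (Set.Ioc a b)] fun s => f (b - s) := by
    filter_upwards [ae_restrict_mem measurableSet_Ioc] with s hs
    exact Real.rpow_nonneg (sub_nonneg.2 hs.2) _
  rw [setLIntegral_congr_fun measurableSet_Ioc (fun s hs => by rw [hf s hs]),
    ← ofReal_integral_eq_lintegral_ofReal
      ((intervalIntegrable_iff_integrableOn_Ioc_of_le hab).1 hint) hnonneg,
    ← intervalIntegral.integral_of_le hab, intervalIntegral.integral_comp_sub_left f,
    integral_rpow (Or.inl (by norm_num)), sub_self, Real.zero_rpow (by norm_num),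
    Real.sqrt_eq_rpow]
  congr 1
  ring_nf

theorem ae_ae_enorm_le_eLpNorm_top {X Y F : Type*} [MeasurableSpace X] [MeasurableSpace Y]
    {μ : Measure X} {ν : Measure Y} [SFinite ν] [NormedAddCommGroup F] (f : X × Y → F) :
    ∀ᵐ x ∂μ, ∀ᵐ y ∂ν, ‖f (x, y)‖ₑ ≤ eLpNorm f ⊤ (μ.prod ν) :=
  Measure.ae_ae_of_ae_prod (eLpNorm_exponent_top (f := f) ▸ ae_le_eLpNormEssSup)

theorem I2_estimate_general (n : ℕ) (C : ℝ)
    (k : ℝ → EuclideanSpace ℝ (Fin n) → EuclideanSpace ℝ (Fin n) → ℂ)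
    (hk : ∀ (τ : ℝ) (x y : EuclideanSpace ℝ (Fin n)), 0 < τ →
      ‖k τ x y‖ ≤ C * (Real.sqrt τ + dist x y) ^ (-((n:ℝ) + 1))) :
    ∃ C' : ℝ, 0 < C' ∧
      ∀ (α : ℝ × EuclideanSpace ℝ (Fin n) → ℂ) (t : ℝ) (x : EuclideanSpace ℝ (Fin n)),
        0 < t →
        (∫⁻ s in Set.Ioc (t/2) t, ∫⁻ y in ball x (Real.sqrt t),
            ENNReal.ofReal (‖k (t - s) x y‖ * ‖α (s, y)‖))
          ≤ ENNReal.ofReal (C' * Real.sqrt t) * eLpNorm α ⊤ volume := by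
  have hrank : (finrank ℝ (EuclideanSpace ℝ (Fin n)) : ℝ) = n := by simp
  set K := ∫⁻ z : EuclideanSpace ℝ (Fin n), ENNReal.ofReal ((1 + ‖z‖) ^ (-((n : ℝ) + 1)))
  have hK : K ≠ ∞ := (finite_integral_one_add_norm (by simp)).ne
  refine ⟨max 1 (2 * C * K.toReal), lt_max_of_lt_left one_pos, fun α t x ht => ?_⟩
  set M := eLpNorm α ⊤ volume
  have hslice : ∀ᵐ s, ∀ᵐ y, ‖α (s, y)‖ₑ ≤ M := by
    simpa only [M, Measure.volume_eq_prod] using ae_ae_enorm_le_eLpNorm_top α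
  calc _ ≤ ∫⁻ s in Set.Ioc (t/2) t,
          ENNReal.ofReal (Real.sqrt (t - s))⁻¹ * (ENNReal.ofReal C * K * M) := by
        refine lintegral_mono_ae ?_
        filter_upwards [ae_restrict_mem measurableSet_Ioc, ae_restrict_of_ae hslice,
          ae_restrict_of_ae (compl_mem_ae_iff.2 (measure_singleton t))] with s hs hαs hst
        have hτ : 0 < t - s := sub_pos.2 (lt_of_le_of_ne hs.2 hst)
        have := lintegral_norm_mul_le_of_le_add_dist_rpow volume (Real.sqrt_pos.2 hτ)
          (fun y => hrank ▸ hk (t - s) x y hτ) hαs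
        rw [hrank] at this
        exact (setLIntegral_le_lintegral _ _).trans this
    _ = ENNReal.ofReal (2 * Real.sqrt (t - t / 2)) * (ENNReal.ofReal C * K * M) := by
        rw [lintegral_mul_const _ (by fun_prop), lintegral_Ioc_inv_sqrt_sub (by linarith)]
    _ ≤ ENNReal.ofReal (2 * Real.sqrt t) * (ENNReal.ofReal C * ENNReal.ofReal K.toReal * M) := by
        rw [ENNReal.ofReal_toReal hK]
        gcongr
        linarith
    _ = ENNReal.ofReal (2 * C * K.toReal * Real.sqrt t) * M := by
        rw [← ENNReal.ofReal_mul' ENNReal.toReal_nonneg, ← mul_assoc,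
          ← ENNReal.ofReal_mul (by positivity)]
        ring_nf
    _ ≤ ENNReal.ofReal (max 1 (2 * C * K.toReal) * Real.sqrt t) * M := by
        gcongr
        exact le_max_right _ _

/-- Under the kernel bound `|k_τ(x,y)| ≤ C(√τ + |x-y|)^{-n-1}`, the middle term
`I₂(t,x) = ∫_{t/2}^t ∫_{B(x,√t)} |k_{t-s}(x,y)||α(s,y)| dy ds` is bounded by
`C' √t ‖α‖_{L^∞}`. -/
theorem I2_estimate (n : ℕ) (C : ℝ) (hC : 0 < C)
    (k : ℝ → EuclideanSpace ℝ (Fin n) → EuclideanSpace ℝ (Fin n) → ℂ)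
    (hk : ∀ (τ : ℝ) (x y : EuclideanSpace ℝ (Fin n)), 0 < τ →
      ‖k τ x y‖ ≤ C * (Real.sqrt τ + dist x y) ^ (-((n:ℝ) + 1))) :
    ∃ C' : ℝ, 0 < C' ∧
      ∀ (α : ℝ × EuclideanSpace ℝ (Fin n) → ℂ) (t : ℝ) (x : EuclideanSpace ℝ (Fin n)),
        0 < t →
        (∫⁻ s in Set.Ioc (t/2) t, ∫⁻ y in ball x (Real.sqrt t),
            ENNReal.ofReal (‖k (t - s) x y‖ * ‖α (s, y)‖))
          ≤ ENNReal.ofReal (C' * Real.sqrt t) * eLpNorm α ⊤ volume :=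
  I2_estimate_general n C k hk
end

section
/- Let μ be a Borel measure on ℝ₊^{n+1} and H : ℝ₊^{n+1} → ℂ a continuous function whose parabolic non-tangential maximal function N(H)(x) = sup{|H(t,y)| : y ∈ B(x,√t)} is in L¹(ℝⁿ). Then ∫_{ℝ₊^{n+1}} |H| dμ ≤ C_n ∫_{ℝⁿ} N(H)(x) · 𝒞(μ)(x) dx, where 𝒞(μ)(x) = sup over open balls B ∋ x of μ(B̂)/|B| and B̂ = {(t,y) : dist(y, Bᶜ) ≥ √t} is the parabolic tent over B. -/
open MeasureTheory Metric
open scoped ENNReal NNReal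

/-- The parabolic tent over an open set `O ⊆ ℝⁿ`:
`Ô = {(t,y) ∈ ℝ₊^{n+1} : dist(y, Oᶜ) ≥ √t}`. -/
def parabolicTent (n : ℕ) (O : Set (EuclideanSpace ℝ (Fin n))) :
    Set (ℝ × EuclideanSpace ℝ (Fin n)) :=
  {z | 0 < z.1 ∧ Real.sqrt z.1 ≤ infDist z.2 Oᶜ}

/-- The parabolic non-tangential maximal function
`N(H)(x) = sup {|H(t,y)| : 0 < t, y ∈ B(x,√t)}`. -/
noncomputable def ntMax (n : ℕ) (H : ℝ × EuclideanSpace ℝ (Fin n) → ℂ)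
    (x : EuclideanSpace ℝ (Fin n)) : ℝ≥0∞ :=
  ⨆ (t : ℝ) (_ : 0 < t) (y : EuclideanSpace ℝ (Fin n)) (_ : y ∈ ball x (Real.sqrt t)),
    ENNReal.ofReal ‖H (t, y)‖

/-- The Carleson box function `𝒞(μ)(x) = sup_{B ∋ x} μ(B̂)/|B|`. -/
noncomputable def carlesonFn (n : ℕ) (μ : Measure (ℝ × EuclideanSpace ℝ (Fin n)))
    (x : EuclideanSpace ℝ (Fin n)) : ℝ≥0∞ :=
  ⨆ (c : EuclideanSpace ℝ (Fin n)) (r : ℝ) (_ : 0 < r) (_ : x ∈ ball c r),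
    μ (parabolicTent n (ball c r)) / volume (ball c r)

/-!
Layer cake: `∫ |H| dμ = ∫₀^∞ μ{|H| > s} ds`. If `|H(t,y)| > s` then `N(H) > s` on all of
`B(y,√t)`, so `(t,y)` lies in the tent over `Oₛ = {N(H) > s}`; here `Oₛᶜ ≠ ∅` because `N(H)` is
integrable on a space of infinite volume. A Vitali subfamily of the balls `B(b, d(b)/5)`,
`d = dist(·, Oₛᶜ)`, is disjoint inside `Oₛ`, and the tents over the enlarged balls `B(b, 3d(b))`
cover `Ôₛ`. As `𝒞(μ) ≥ μ(B̂)/|B|` on `B`, this gives `μ(Ôₛ) ≤ 15ⁿ ∫_{Oₛ} 𝒞(μ)`. Integrating in `s`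
and using the layer cake formula for `N(H)` against `𝒞(μ) dx` yields the claim with `C = 15ⁿ`.
-/

open Set

lemma nonempty_compl_ball {E : Type*} [NormedAddCommGroup E] [NormedSpace ℝ E] [Nontrivial E]
    (c : E) (r : ℝ) : (ball c r)ᶜ.Nonempty :=
  nonempty_compl.2 fun h => NormedSpace.unbounded_univ ℝ E (h ▸ isBounded_ball)

lemma le_infDist_compl_iff_ball_subset {α : Type*} [PseudoMetricSpace α] {s : Set α}
    (hs : sᶜ.Nonempty) {x : α} {r : ℝ} : r ≤ infDist x sᶜ ↔ ball x r ⊆ s := by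
  rw [le_infDist hs]
  exact ⟨fun h y hy => by_contra fun hys => (h hys).not_gt (mem_ball'.1 hy),
    fun h y hy => not_lt.1 fun hlt => hy (h (mem_ball'.2 hlt))⟩

lemma exists_le_of_lintegral_ne_top {α : Type*} [MeasurableSpace α] {μ : Measure α}
    (hμ : μ univ = ⊤) {f : α → ℝ≥0∞} (hf : ∫⁻ x, f x ∂μ ≠ ⊤) {c : ℝ≥0∞} (hc : c ≠ 0) :
    ∃ x, f x ≤ c := by
  by_contra! h
  refine hf (top_le_iff.1 ?_)
  calc ⊤ = ∫⁻ _, c ∂μ := by rw [lintegral_const, hμ, ENNReal.mul_top hc]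
    _ ≤ ∫⁻ x, f x ∂μ := lintegral_mono fun x => (h x).le

lemma volume_setOf_ofReal_lt_inter_Ioi (a : ℝ≥0∞) :
    volume ({t : ℝ | ENNReal.ofReal t < a} ∩ Ioi 0) = a := by
  rcases eq_or_ne a ⊤ with rfl | ha
  · simp [ENNReal.ofReal_lt_top]
  · have : {t : ℝ | ENNReal.ofReal t < a} ∩ Ioi 0 = Ioo 0 a.toReal := by
      ext t
      simp only [mem_inter_iff, mem_ofPred_eq, mem_Ioi, mem_Ioo]
      exact ⟨fun h => ⟨h.2, (ENNReal.ofReal_lt_iff_lt_toReal h.2.le ha).1 h.1⟩,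
        fun h => ⟨(ENNReal.ofReal_lt_iff_lt_toReal h.1.le ha).2 h.2, h.1⟩⟩
    rw [this, Real.volume_Ioo, sub_zero, ENNReal.ofReal_toReal ha]

theorem lintegral_eq_lintegral_meas_ofReal_lt {α : Type*} [MeasurableSpace α] (μ : Measure α)
    [SFinite μ] {f : α → ℝ≥0∞} (hf : Measurable f) :
    ∫⁻ x, f x ∂μ = ∫⁻ t in Ioi 0, μ {x | ENNReal.ofReal t < f x} := by
  have hs : MeasurableSet {p : α × ℝ | ENNReal.ofReal p.2 < f p.1} :=
    measurableSet_lt (ENNReal.measurable_ofReal.comp measurable_snd) (hf.comp measurable_fst)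
  calc ∫⁻ x, f x ∂μ
      = ∫⁻ x, volume.restrict (Ioi 0) {t : ℝ | ENNReal.ofReal t < f x} ∂μ := by
        refine lintegral_congr fun x => ?_
        rw [Measure.restrict_apply (measurableSet_lt ENNReal.measurable_ofReal measurable_const),
          volume_setOf_ofReal_lt_inter_Ioi]
    _ = (μ.prod (volume.restrict (Ioi 0))) {p : α × ℝ | ENNReal.ofReal p.2 < f p.1} :=
        (Measure.prod_apply hs).symm
    _ = ∫⁻ t in Ioi 0, μ {x | ENNReal.ofReal t < f x} := Measure.prod_apply_symm hs

section Tent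

variable {n : ℕ}

lemma mem_parabolicTent_iff {O : Set (EuclideanSpace ℝ (Fin n))} (hO : Oᶜ.Nonempty)
    {z : ℝ × EuclideanSpace ℝ (Fin n)} :
    z ∈ parabolicTent n O ↔ 0 < z.1 ∧ ball z.2 (Real.sqrt z.1) ⊆ O :=
  and_congr_right' (le_infDist_compl_iff_ball_subset hO)

lemma mem_parabolicTent_ball_of_dist_le [NeZero n] {O : Set (EuclideanSpace ℝ (Fin n))}
    {z : ℝ × EuclideanSpace ℝ (Fin n)} (hz : z ∈ parabolicTent n O) {b : EuclideanSpace ℝ (Fin n)}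
    (hb : dist z.2 b ≤ 4 * (infDist b Oᶜ / 5)) :
    z ∈ parabolicTent n (ball b (15 * (infDist b Oᶜ / 5))) := by
  refine (mem_parabolicTent_iff (nonempty_compl_ball _ _)).2 ⟨hz.1, ball_subset_ball' ?_⟩
  have := hz.2.trans (infDist_le_infDist_add_dist (x := z.2) (y := b) (s := Oᶜ))
  linarith [infDist_nonneg (x := b) (s := Oᶜ)]

lemma ofReal_norm_le_ntMax (H : ℝ × EuclideanSpace ℝ (Fin n) → ℂ) {t : ℝ} (ht : 0 < t)
    {x y : EuclideanSpace ℝ (Fin n)} (hy : y ∈ ball x (Real.sqrt t)) :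
    ENNReal.ofReal ‖H (t, y)‖ ≤ ntMax n H x :=
  le_iSup₂_of_le t ht (le_iSup₂_of_le y hy le_rfl)

lemma lowerSemicontinuous_ntMax (H : ℝ × EuclideanSpace ℝ (Fin n) → ℂ) :
    LowerSemicontinuous (ntMax n H) := by
  intro x a ha
  obtain ⟨t, ht, y, hy, hlt⟩ :
      ∃ t, 0 < t ∧ ∃ y ∈ ball x (Real.sqrt t), a < ENNReal.ofReal ‖H (t, y)‖ := by
    simpa only [ntMax, lt_iSup_iff, exists_prop] using ha
  filter_upwards [isOpen_ball.mem_nhds (mem_ball_comm.1 hy)] with x' hx'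
  exact hlt.trans_le (ofReal_norm_le_ntMax H ht (mem_ball_comm.1 hx'))

lemma measure_parabolicTent_div_le_carlesonFn (μ : Measure (ℝ × EuclideanSpace ℝ (Fin n)))
    {c x : EuclideanSpace ℝ (Fin n)} {r : ℝ} (hr : 0 < r) (hx : x ∈ ball c r) :
    μ (parabolicTent n (ball c r)) / volume (ball c r) ≤ carlesonFn n μ x :=
  le_iSup₂_of_le c r (le_iSup₂_of_le hr hx le_rfl)

lemma lowerSemicontinuous_carlesonFn (μ : Measure (ℝ × EuclideanSpace ℝ (Fin n))) :
    LowerSemicontinuous (carlesonFn n μ) := by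
  intro x a ha
  obtain ⟨c, r, hr, hx, hlt⟩ :
      ∃ c r, 0 < r ∧ x ∈ ball c r ∧ a < μ (parabolicTent n (ball c r)) / volume (ball c r) := by
    simpa only [carlesonFn, lt_iSup_iff, exists_prop] using ha
  filter_upwards [isOpen_ball.mem_nhds hx] with x' hx'
  exact hlt.trans_le (measure_parabolicTent_div_le_carlesonFn μ hr hx')

lemma measure_parabolicTent_ball_le [NeZero n] (μ : Measure (ℝ × EuclideanSpace ℝ (Fin n)))
    (c : EuclideanSpace ℝ (Fin n)) {k r : ℝ} (hk : 1 ≤ k) (hr : 0 < r) :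
    μ (parabolicTent n (ball c (k * r))) ≤
      ENNReal.ofReal (k ^ n) * ∫⁻ x in ball c r, carlesonFn n μ x := by
  set T := μ (parabolicTent n (ball c (k * r)))
  set V := volume (ball c (k * r))
  have hV : V = ENNReal.ofReal (k ^ n) * volume (ball c r) := by
    simp only [V, Measure.addHaar_ball _ _ (by positivity : 0 ≤ k * r),
      Measure.addHaar_ball _ _ hr.le, finrank_euclideanSpace_fin, mul_pow,
      ENNReal.ofReal_mul (by positivity : (0 : ℝ) ≤ k ^ n), mul_assoc]
  calc T = V * (T / V) := (ENNReal.mul_div_cancel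
        (measure_ball_pos _ _ (by positivity)).ne' measure_ball_lt_top.ne).symm
    _ = ENNReal.ofReal (k ^ n) * ∫⁻ _ in ball c r, T / V := by
        rw [setLIntegral_const, hV]
        ring
    _ ≤ ENNReal.ofReal (k ^ n) * ∫⁻ x in ball c r, carlesonFn n μ x := by
        refine mul_le_mul_right (setLIntegral_mono' measurableSet_ball fun x hx => ?_) _
        exact measure_parabolicTent_div_le_carlesonFn μ (by positivity)
          (ball_subset_ball (le_mul_of_one_le_left hr.le hk) hx)

lemma measure_parabolicTent_inter_le [NeZero n] (μ : Measure (ℝ × EuclideanSpace ℝ (Fin n)))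
    {O : Set (EuclideanSpace ℝ (Fin n))} (R : ℝ) :
    μ (parabolicTent n O ∩ {z | infDist z.2 Oᶜ ≤ R}) ≤
      ENNReal.ofReal (15 ^ n) * ∫⁻ x in O, carlesonFn n μ x := by
  set d := fun y => infDist y Oᶜ
  obtain ⟨u, hut, hdisj, hcov⟩ :=
    Vitali.exists_disjoint_subfamily_covering_enlargement_closedBall {y | 0 < d y ∧ d y ≤ R} id
      (fun y => d y / 5) R (fun y hy => by linarith [hy.1, hy.2]) 4 (by norm_num)
  have hd : ∀ b ∈ u, 0 < d b / 5 := fun b hb => by linarith [(hut hb).1]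
  have hdisj' : u.PairwiseDisjoint fun b => ball b (d b / 5) :=
    hdisj.mono fun b => ball_subset_closedBall
  have hu : u.Countable :=
    hdisj'.countable_of_isOpen (fun _ _ => isOpen_ball) fun b hb => nonempty_ball.2 (hd b hb)
  have hcover : parabolicTent n O ∩ {z | d z.2 ≤ R} ⊆
      ⋃ b ∈ u, parabolicTent n (ball b (15 * (d b / 5))) := by
    rintro z ⟨hz, hzR⟩
    obtain ⟨b, hb, hsub⟩ := hcov z.2 ⟨(Real.sqrt_pos.2 hz.1).trans_le hz.2, hzR⟩
    have hdz : 0 ≤ d z.2 / 5 := div_nonneg infDist_nonneg (by norm_num)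
    exact mem_biUnion hb
      (mem_parabolicTent_ball_of_dist_le hz (mem_closedBall.1 (hsub (mem_closedBall_self hdz))))
  have hballs : ⋃ b ∈ u, ball b (d b / 5) ⊆ O := iUnion₂_subset fun b hb =>
    (ball_subset_ball (by linarith [hd b hb])).trans ball_infDist_compl_subset
  calc μ (parabolicTent n O ∩ {z | d z.2 ≤ R})
      ≤ ∑' b : u, μ (parabolicTent n (ball b (15 * (d b / 5)))) :=
        (measure_mono hcover).trans (measure_biUnion_le μ hu _)
    _ ≤ ∑' b : u, ENNReal.ofReal (15 ^ n) * ∫⁻ x in ball b.1 (d b / 5), carlesonFn n μ x :=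
        ENNReal.tsum_le_tsum fun b =>
          measure_parabolicTent_ball_le μ b (k := 15) (by norm_num) (hd b b.2)
    _ = ENNReal.ofReal (15 ^ n) * ∫⁻ x in ⋃ b ∈ u, ball b (d b / 5), carlesonFn n μ x := by
        rw [ENNReal.tsum_mul_left, lintegral_biUnion hu (fun _ _ => measurableSet_ball) hdisj']
    _ ≤ ENNReal.ofReal (15 ^ n) * ∫⁻ x in O, carlesonFn n μ x :=
        mul_le_mul_right (lintegral_mono_set hballs) _

theorem measure_parabolicTent_le [NeZero n] (μ : Measure (ℝ × EuclideanSpace ℝ (Fin n)))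
    (O : Set (EuclideanSpace ℝ (Fin n))) :
    μ (parabolicTent n O) ≤ ENNReal.ofReal (15 ^ n) * ∫⁻ x in O, carlesonFn n μ x := by
  have hexhaust : parabolicTent n O = ⋃ m : ℕ, parabolicTent n O ∩ {z | infDist z.2 Oᶜ ≤ m} := by
    refine subset_antisymm (fun z hz => ?_) (iUnion_subset fun m => inter_subset_left)
    obtain ⟨m, hm⟩ := exists_nat_ge (infDist z.2 Oᶜ)
    exact mem_iUnion.2 ⟨m, hz, hm⟩
  have hmono : Monotone fun m : ℕ => parabolicTent n O ∩ {z | infDist z.2 Oᶜ ≤ m} :=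
    fun m m' hm => inter_subset_inter_right _ fun z (hz : infDist z.2 Oᶜ ≤ m) =>
      hz.trans (Nat.cast_le.2 hm)
  rw [hexhaust, hmono.measure_iUnion]
  exact iSup_le fun m => measure_parabolicTent_inter_le μ m

lemma setOf_lt_norm_inter_subset_parabolicTent (H : ℝ × EuclideanSpace ℝ (Fin n) → ℂ) {s : ℝ}
    (hs : 0 ≤ s) (hcompl : {x | ENNReal.ofReal s < ntMax n H x}ᶜ.Nonempty) :
    {z | s < ‖H z‖} ∩ {z | 0 < z.1} ⊆ parabolicTent n {x | ENNReal.ofReal s < ntMax n H x} := by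
  rintro z ⟨hHz, hz⟩
  refine (mem_parabolicTent_iff hcompl).2 ⟨hz, fun x hx => ?_⟩
  exact ((ENNReal.ofReal_lt_ofReal_iff_of_nonneg hs).2 hHz).trans_le
    (ofReal_norm_le_ntMax H hz (mem_ball_comm.1 hx))

end Tent

/-- **Parabolic Carleson embedding:**
`∫ |H| dμ ≤ C_n ∫ N(H)(x) 𝒞(μ)(x) dx`. -/
theorem carleson_embedding (n : ℕ) (hn : 1 ≤ n) :
    ∃ C : ℝ, 0 < C ∧
      ∀ (μ : Measure (ℝ × EuclideanSpace ℝ (Fin n)))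
        (H : ℝ × EuclideanSpace ℝ (Fin n) → ℂ),
        ContinuousOn H {z | 0 < z.1} →
        (∫⁻ x, ntMax n H x) < ⊤ →
        (∫⁻ z in {z : ℝ × EuclideanSpace ℝ (Fin n) | 0 < z.1}, ENNReal.ofReal ‖H z‖ ∂μ)
          ≤ ENNReal.ofReal C * ∫⁻ x, ntMax n H x * carlesonFn n μ x := by
  have : NeZero n := ⟨by omega⟩
  refine ⟨15 ^ n, by positivity, fun μ H hH hN => ?_⟩
  have hU : MeasurableSet {z : ℝ × EuclideanSpace ℝ (Fin n) | 0 < z.1} :=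
    measurableSet_lt measurable_const measurable_fst
  have hNm := (lowerSemicontinuous_ntMax H).measurable
  have hlevel : ∀ s : ℝ, MeasurableSet {x | ENNReal.ofReal s < ntMax n H x} := fun s =>
    measurableSet_lt measurable_const hNm
  have hcompl : ∀ s : ℝ, 0 < s → {x | ENNReal.ofReal s < ntMax n H x}ᶜ.Nonempty := fun s hs =>
    (exists_le_of_lintegral_ne_top (measure_univ_of_isAddLeftInvariant _) hN.ne
      (ENNReal.ofReal_pos.2 hs).ne').imp fun _ => not_lt.2
  calc ∫⁻ z in {z | 0 < z.1}, ENNReal.ofReal ‖H z‖ ∂μ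
      = ∫⁻ s in Ioi 0, μ.restrict {z | 0 < z.1} {z | s < ‖H z‖} :=
        lintegral_eq_lintegral_meas_lt _ (.of_forall fun _ => norm_nonneg _)
          (hH.norm.aemeasurable hU)
    _ ≤ ∫⁻ s in Ioi 0, ENNReal.ofReal (15 ^ n) *
          ∫⁻ x in {x | ENNReal.ofReal s < ntMax n H x}, carlesonFn n μ x :=
        setLIntegral_mono' measurableSet_Ioi fun s hs => by
          rw [Measure.restrict_apply' hU]
          exact (measure_mono (setOf_lt_norm_inter_subset_parabolicTent H (le_of_lt hs)
            (hcompl s hs))).trans (measure_parabolicTent_le μ _)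
    _ = ENNReal.ofReal (15 ^ n) * ∫⁻ x, ntMax n H x * carlesonFn n μ x := by
        simp_rw [← withDensity_apply _ (hlevel _)]
        rw [lintegral_const_mul' _ _ ENNReal.ofReal_ne_top,
          ← lintegral_eq_lintegral_meas_ofReal_lt _ hNm,
          lintegral_withDensity_eq_lintegral_mul _
            (lowerSemicontinuous_carlesonFn μ).measurable hNm]
        simp_rw [Pi.mul_apply, mul_comm]
end

section
/- Let O ⊊ ℝⁿ be an open set and suppose (B_j) is a Whitney cover of O by open balls B_j = B(x_j, r_j) ⊆ O such that 4B_j ⊄ O. If (t,y) ∈ Ô (the parabolic tent over O), then there exists an index i with y ∈ B_i and (t,y) ∈ (6B_i)^, i.e. dist(y, (6B_i)ᶜ) ≥ √t. -/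
open MeasureTheory Metric
open scoped ENNReal NNReal

/-- **Whitney covering lemma for parabolic tents.** If `(B_j)` is a Whitney cover of the
open set `O ⊊ ℝⁿ` by balls `B_j ⊆ O` with `4B_j ⊄ O`, and `(t,y)` lies in the parabolic
tent over `O`, then there is an index `i` with `y ∈ B_i` and `(t,y)` in the tent over
`6B_i`, i.e. `dist(y, (6B_i)ᶜ) ≥ √t`. -/
theorem whitney_tent_cover (n : ℕ) {ι : Type*}
    (O : Set (EuclideanSpace ℝ (Fin n))) (hO : IsOpen O) (hOne : O ≠ Set.univ)
    (x : ι → EuclideanSpace ℝ (Fin n)) (r : ι → ℝ) (hr : ∀ i, 0 < r i)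
    (hsub : ∀ i, ball (x i) (r i) ⊆ O)
    (hcover : O ⊆ ⋃ i, ball (x i) (r i))
    (hwhitney : ∀ i, ¬ ball (x i) (4 * r i) ⊆ O)
    (t : ℝ) (y : EuclideanSpace ℝ (Fin n)) (ht : 0 < t)
    (hy : Real.sqrt t ≤ infDist y Oᶜ) :
    ∃ i, y ∈ ball (x i) (r i) ∧ Real.sqrt t ≤ infDist y (ball (x i) (6 * r i))ᶜ := by
  have hst : 0 < Real.sqrt t := Real.sqrt_pos.mpr ht
  -- y ∈ O
  have hyO : y ∈ O := by
    by_contra h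
    have : infDist y Oᶜ = 0 := infDist_zero_of_mem h
    linarith
  obtain ⟨i, hi⟩ := Set.mem_iUnion.mp (hcover hyO)
  refine ⟨i, hi, ?_⟩
  obtain ⟨z, hz4, hzO⟩ := Set.not_subset.mp (hwhitney i)
  have hzd : Real.sqrt t ≤ dist y z := hy.trans (infDist_le_dist_of_mem hzO)
  have hyx : dist y (x i) < r i := mem_ball.mp hi
  have hzx : dist z (x i) < 4 * r i := mem_ball.mp hz4
  have h5 : Real.sqrt t < 5 * r i := by
    have := dist_triangle y (x i) z
    have hxz : dist (x i) z < 4 * r i := by rwa [dist_comm]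
    linarith
  -- the complement of the big ball is nonempty
  have hne : ((ball (x i) (6 * r i))ᶜ : Set (EuclideanSpace ℝ (Fin n))).Nonempty := by
    rcases n with _ | m
    · exfalso
      have : y = z := Subsingleton.elim y z
      rw [this, dist_self] at hzd
      linarith
    · by_contra h
      rw [Set.not_nonempty_iff_eq_empty, Set.compl_empty_iff] at h
      have hb : Bornology.IsBounded (Set.univ : Set (EuclideanSpace ℝ (Fin (m + 1)))) := by
        rw [← h]; exact isBounded_ball
      exact NormedSpace.unbounded_univ ℝ (EuclideanSpace ℝ (Fin (m + 1))) hb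
  by_contra hlt
  push_neg at hlt
  obtain ⟨w, hw, hdw⟩ := (infDist_lt_iff hne).mp hlt
  have hwx : 6 * r i ≤ dist w (x i) := by
    by_contra h
    exact hw (by simpa [mem_ball] using lt_of_not_ge h)
  have htri := dist_triangle w y (x i)
  have hyw : dist y w = dist w y := dist_comm y w
  rw [hyw] at hdw
  linarith
end
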